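/- arXiv:1805.01706 — 2 statements merged into one kernel-verified Lean document; each statement's English description precedes it below -/
import Mathlib

section
/- Let H be a Hilbert space with a continuous bilinear form b : H × Q → ℝ on Hilbert spaces H, Q satisfying the inf-sup condition sup_{v ≠ 0} |b(v,q)|/‖v‖ ≥ β‖q‖ for all q ∈ Q with β > 0. If x ∈ H satisfies b(x,q) = 0 for all q ∈ Q and F : H → ℝ is a bounded linear functional vanishing on the kernel X = {v ∈ H : b(v,q) = 0 ∀q ∈ Q}, then there exists a unique p ∈ Q such that F(v) = b(v,p) for all v ∈ H. -/
/-!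
The operator `B : Q → H'`, `B q = b(·, q)`, is bounded below by the inf-sup condition, so it is
injective with closed range. Transporting that range to `H` by the Riesz map gives a closed
subspace whose orthogonal complement is exactly the kernel of `b`; the Riesz representative of `F`
is orthogonal to that kernel, hence lies in the subspace, i.e. `F = B p`.
-/

open InnerProductSpace

lemma ContinuousLinearMap.antilipschitz_of_le_iSup_norm_apply_div {𝕜 E F G : Type*}
    [NontriviallyNormedField 𝕜] [SeminormedAddCommGroup E] [NormedSpace 𝕜 E]
    [SeminormedAddCommGroup F] [NormedSpace 𝕜 F] [SeminormedAddCommGroup G] [NormedSpace 𝕜 G]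
    (B : F →L[𝕜] E →L[𝕜] G) {β : ℝ} (hβ : 0 < β)
    (hB : ∀ q, β * ‖q‖ ≤ ⨆ v, ‖B q v‖ / ‖v‖) :
    AntilipschitzWith ⟨β⁻¹, inv_nonneg.2 hβ.le⟩ B := by
  refine B.antilipschitz_of_bound fun q => ?_
  have hsup : ⨆ v, ‖B q v‖ / ‖v‖ ≤ ‖B q‖ :=
    ciSup_le fun v => div_le_of_le_mul₀ (norm_nonneg _) (norm_nonneg _) ((B q).le_opNorm v)
  show ‖q‖ ≤ β⁻¹ * ‖B q‖
  rw [← div_eq_inv_mul, le_div_iff₀' hβ]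
  exact (hB q).trans hsup

theorem ContinuousLinearMap.existsUnique_apply_eq_of_antilipschitz {𝕜 E F : Type*} [RCLike 𝕜]
    [NormedAddCommGroup E] [InnerProductSpace 𝕜 E] [CompleteSpace E]
    [NormedAddCommGroup F] [NormedSpace 𝕜 F] [CompleteSpace F]
    (B : F →L[𝕜] StrongDual 𝕜 E) {K : NNReal} (hB : AntilipschitzWith K B)
    (φ : StrongDual 𝕜 E) (hφ : ∀ v, (∀ q, B q v = 0) → φ v = 0) :
    ∃! p, B p = φ := by
  set S : Submodule 𝕜 E :=
    (LinearMap.range (B : F →ₗ[𝕜] StrongDual 𝕜 E)).comap (toDual 𝕜 E).toLinearEquiv.toLinearMap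
  have hS : IsClosed (S : Set E) :=
    (hB.isClosed_range B.uniformContinuous).preimage (toDual 𝕜 E).continuous
  have : CompleteSpace S := hS.completeSpace_coe
  have hmem : (toDual 𝕜 E).symm φ ∈ S := by
    rw [← S.orthogonal_orthogonal]
    intro w hw
    have hBw : ∀ q, B q w = 0 := fun q => by
      rw [← toDual_symm_apply]
      exact Submodule.inner_right_of_mem_orthogonal (by simp [S]) hw
    rw [← inner_conj_symm, toDual_symm_apply, hφ w hBw, map_zero]
  obtain ⟨p, hp⟩ := hmem
  have hBp : B p = φ := by simpa [S] using hp
  exact ⟨p, hBp, fun p' hp' => hB.injective (hp'.trans hBp.symm)⟩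

theorem stmt1_general {H Q : Type*} [NormedAddCommGroup H] [InnerProductSpace ℝ H] [CompleteSpace H]
    [NormedAddCommGroup Q] [InnerProductSpace ℝ Q] [CompleteSpace Q]
    (b : H → Q → ℝ)
    (hb1 : ∀ v : H, IsLinearMap ℝ (fun q => b v q))
    (hb2 : ∀ q : Q, IsLinearMap ℝ (fun v => b v q))
    (M : ℝ) (hbound : ∀ (v : H) (q : Q), |b v q| ≤ M * ‖v‖ * ‖q‖)
    (β : ℝ) (hβ : 0 < β)
    (hinfsup : ∀ q : Q, β * ‖q‖ ≤ ⨆ v : H, |b v q| / ‖v‖)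
    (F : H →L[ℝ] ℝ)
    (hF : ∀ v : H, (∀ q : Q, b v q = 0) → F v = 0) :
    ∃! p : Q, ∀ v : H, F v = b v p := by
  let B : Q →L[ℝ] StrongDual ℝ H :=
    (LinearMap.mk₂ ℝ (fun q v => b v q) (fun _ _ v => (hb1 v).map_add _ _)
      (fun _ _ v => (hb1 v).map_smul _ _) (fun q _ _ => (hb2 q).map_add _ _)
      (fun _ q _ => (hb2 q).map_smul _ _)).mkContinuous₂ M
      fun q v => by
        simpa only [LinearMap.mk₂_apply, Real.norm_eq_abs, mul_right_comm] using hbound v q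
  have hB : AntilipschitzWith _ B := B.antilipschitz_of_le_iSup_norm_apply_div hβ hinfsup
  refine (existsUnique_congr fun p => ?_).1 (B.existsUnique_apply_eq_of_antilipschitz hB F hF)
  rw [ContinuousLinearMap.ext_iff]
  exact forall_congr' fun v => eq_comm

/-- Pressure recovery: if a bounded linear functional vanishes on the kernel of an
inf-sup stable bilinear form `b`, it is represented by a unique Lagrange multiplier. -/
theorem stmt1 {H Q : Type*} [NormedAddCommGroup H] [InnerProductSpace ℝ H] [CompleteSpace H]
    [NormedAddCommGroup Q] [InnerProductSpace ℝ Q] [CompleteSpace Q]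
    (b : H → Q → ℝ)
    (hb1 : ∀ v : H, IsLinearMap ℝ (fun q => b v q))
    (hb2 : ∀ q : Q, IsLinearMap ℝ (fun v => b v q))
    (M : ℝ) (hbound : ∀ (v : H) (q : Q), |b v q| ≤ M * ‖v‖ * ‖q‖)
    (β : ℝ) (hβ : 0 < β)
    (hinfsup : ∀ q : Q, β * ‖q‖ ≤ ⨆ v : H, |b v q| / ‖v‖)
    (x : H) (hx : ∀ q : Q, b x q = 0)
    (F : H →L[ℝ] ℝ)
    (hF : ∀ v : H, (∀ q : Q, b v q = 0) → F v = 0) :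
    ∃! p : Q, ∀ v : H, F v = b v p :=
  stmt1_general b hb1 hb2 M hbound β hβ hinfsup F hF
end

section
/- Under the small-data condition 2‖β‖∞²/(νσ) < 1, the homogeneous DG system admits only the trivial solution: if (u_h, ω_h, p_h) satisfies a(u_h,u_h) + c(ω_h,u_h) + d(ω_h,ω_h) + j(u_h,u_h) + e(p_h,p_h) = 0, where a(u,u) = σ‖u‖₀², d(ω,ω) = ‖ω‖₀², j(u,u) = |u|_j² ≥ 0, e(p,p) = |p|_e² ≥ 0, and |c(ω,u)| ≤ (2/√ν)‖β‖∞‖ω‖₀‖u‖₀, then u_h = 0, ω_h = 0, |p_h|_e = 0. -/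
/-- Core estimate of Proposition 4.1: the homogeneous DG system has only the
trivial solution under the small-data condition. -/
theorem stmt17 {U W : Type*} [NormedAddCommGroup U] [NormedAddCommGroup W]
    (σ ν B : ℝ) (hσ : 0 < σ) (hν : 0 < ν) (hB : 0 ≤ B)
    (hsmall : 2 * B ^ 2 / (ν * σ) < 1)
    (uh : U) (wh : W) (c j2 e2 : ℝ)
    (hj : 0 ≤ j2) (he : 0 ≤ e2)
    (hc : |c| ≤ 2 / Real.sqrt ν * B * ‖wh‖ * ‖uh‖)
    (hzero : σ * ‖uh‖ ^ 2 + c + ‖wh‖ ^ 2 + j2 + e2 = 0) :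
    uh = 0 ∧ wh = 0 ∧ e2 = 0 := by
  set a := ‖uh‖ with ha
  set w := ‖wh‖ with hw
  have ha0 : 0 ≤ a := norm_nonneg _
  have hw0 : 0 ≤ w := norm_nonneg _
  have hs : 0 < Real.sqrt ν := Real.sqrt_pos.mpr hν
  have hs2 : Real.sqrt ν ^ 2 = ν := Real.sq_sqrt hν.le
  have hBν : 2 * B ^ 2 < ν * σ := by
    have hνσ : 0 < ν * σ := mul_pos hν hσ
    calc 2 * B ^ 2 = (2 * B ^ 2 / (ν * σ)) * (ν * σ) := by field_simp
    _ < 1 * (ν * σ) := by exact mul_lt_mul_of_pos_right hsmall hνσ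
    _ = ν * σ := by ring
  -- Young's inequality: 2/√ν * B * w * a ≤ w² + B²/ν a²
  have hyoung : 2 / Real.sqrt ν * B * w * a ≤ w ^ 2 + B ^ 2 / ν * a ^ 2 := by
    have h1 : (B * a / Real.sqrt ν) ^ 2 = B ^ 2 / ν * a ^ 2 := by
      rw [div_pow, mul_pow, hs2]; ring
    have h2 : 2 * w * (B * a / Real.sqrt ν) ≤ w ^ 2 + (B * a / Real.sqrt ν) ^ 2 :=
      two_mul_le_add_sq w _
    rw [h1] at h2
    calc 2 / Real.sqrt ν * B * w * a = 2 * w * (B * a / Real.sqrt ν) := by ring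
    _ ≤ w ^ 2 + B ^ 2 / ν * a ^ 2 := h2
  have hnegc : -c ≤ |c| := neg_le_abs c
  -- main estimate: σ a² ≤ B²/ν a² + (w² cancels) ...
  have hBν' : B ^ 2 / ν < σ / 2 := by
    rw [div_lt_div_iff₀ hν two_pos]
    nlinarith
  have haz : a = 0 := by
    by_contra h
    have ha' : 0 < a := lt_of_le_of_ne ha0 (Ne.symm h)
    nlinarith [hzero, hc, hnegc, hyoung, hj, he, sq_nonneg a, mul_lt_mul_of_pos_right hBν' (pow_pos ha' 2)]
  have hu : uh = 0 := norm_eq_zero.mp haz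
  have hc0 : c = 0 := by
    have : |c| ≤ 0 := by
      calc |c| ≤ 2 / Real.sqrt ν * B * w * a := hc
      _ = 0 := by rw [haz]; ring
    exact abs_nonpos_iff.mp this
  have hrest : w ^ 2 + j2 + e2 = 0 := by
    rw [haz, hc0] at hzero; linarith
  have hwz : w = 0 := by nlinarith [sq_nonneg w]
  exact ⟨hu, norm_eq_zero.mp hwz, by linarith [hrest, hwz, sq_nonneg w]⟩
end
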